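/- Let T(x) = 2x (mod 1) on S¹ and let μ₂ be a T-invariant probability with Hölder Jacobian J₂. Then h(μ₂) = inf over all positive continuous (or Hölder) functions v of ∫ log( (L₀ v)(s) / v(s) ) dμ₂(s), where (L₀ v)(s) = v(s/2) + v(s/2 + 1/2). Consequently, to prove h(ν) ≥ h(μ₂) for some T-invariant ν, it suffices to exhibit a positive continuous u with −∫ log u dμ₂ = h(ν) and L₀ u ≤ 1 everywhere. -/
import Mathlib

open MeasureTheory
noncomputable section

abbrev S1 := AddCircle (1 : ℝ)

def T : S1 → S1 := fun x => x + x

instance : Fact ((0:ℝ) < 1) := ⟨one_pos⟩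

def br0 (y : S1) : S1 := (((AddCircle.equivIco (1:ℝ) 0 y : ℝ)) / 2 : ℝ)
def br1 (y : S1) : S1 := br0 y + (((1:ℝ)/2 : ℝ) : S1)

def mconv (μ ν : Measure S1) : Measure S1 :=
  (μ.prod ν).map (fun p => p.1 + p.2)

def Lop (J f : S1 → ℝ) : S1 → ℝ :=
  fun y => J (br0 y) * f (br0 y) + J (br1 y) * f (br1 y)

def IsGibbs (J : S1 → ℝ) (μ : Measure S1) : Prop :=
  IsProbabilityMeasure μ ∧ ∀ f : C(S1, ℝ), ∫ y, Lop J (f : S1 → ℝ) y ∂μ = ∫ x, f x ∂μ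

def entropy (μ : Measure S1) : ℝ :=
  ⨅ v : {v : C(S1, ℝ) // ∀ x, 0 < v x},
    ∫ s, Real.log ((v.1 (br0 s) + v.1 (br1 s)) / v.1 s) ∂μ

def IsHolder (J : S1 → ℝ) : Prop :=
  ∃ (K α : NNReal), 0 < α ∧ α ≤ 1 ∧ HolderWith K α J


lemma measurable_br0 : Measurable br0 := by
  have h1 : Measurable fun y : S1 => (AddCircle.equivIco (1:ℝ) 0 y : ℝ) :=
    measurable_subtype_coe.comp (AddCircle.measurableEquivIco (1:ℝ) 0).measurable
  exact (AddCircle.measurable_mk').comp (h1.div_const 2)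

lemma measurable_br1 : Measurable br1 :=
  measurable_br0.add_const _

lemma abs_le_max_of_mem {a b x : ℝ} (h1 : a ≤ x) (h2 : x ≤ b) : |x| ≤ max |a| |b| :=
  abs_le.2 ⟨le_trans (neg_le_neg (le_max_left |a| |b|)) (le_trans (neg_abs_le a) h1),
    le_trans h2 (le_trans (le_abs_self b) (le_max_right |a| |b|))⟩

lemma intble {μ : Measure S1} [IsFiniteMeasure μ] {f : S1 → ℝ} (hm : Measurable f)
    {C : ℝ} (h : ∀ x, |f x| ≤ C) : Integrable f μ :=
  (integrable_const C).mono' hm.aestronglyMeasurable (ae_of_all _ (by simpa using h))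

/-- positive lower bound and upper bound for a positive continuous function on S1 -/
lemma exists_bounds {u : S1 → ℝ} (hu : Continuous u) (hupos : ∀ x, 0 < u x) :
    ∃ m M : ℝ, 0 < m ∧ m ≤ M ∧ ∀ x, u x ∈ Set.Icc m M := by
  obtain ⟨x0, -, hx0⟩ := isCompact_univ.exists_isMinOn (Set.univ_nonempty) hu.continuousOn
  obtain ⟨x1, -, hx1⟩ := isCompact_univ.exists_isMaxOn (Set.univ_nonempty) hu.continuousOn
  exact ⟨u x0, u x1, hupos x0, hx0 (Set.mem_univ x1),
    fun x => ⟨hx0 (Set.mem_univ x), hx1 (Set.mem_univ x)⟩⟩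

/-- Key lemma: the entropy of the Gibbs measure is a lower bound for the
variational functional. -/
lemma key_lb (J₂ : S1 → ℝ) (μ₂ : Measure S1)
    (hJc : Continuous J₂) (hpos2 : ∀ x, 0 < J₂ x)
    (hfib2 : ∀ y, J₂ (br0 y) + J₂ (br1 y) = 1)
    (hG2 : IsGibbs J₂ μ₂)
    (u : S1 → ℝ) (hu : Continuous u) (hupos : ∀ x, 0 < u x) :
    (-∫ s, Real.log (J₂ s) ∂μ₂) ≤
      ∫ s, Real.log ((u (br0 s) + u (br1 s)) / u s) ∂μ₂ := by
  haveI : IsProbabilityMeasure μ₂ := hG2.1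
  obtain ⟨m, M, hm, hmM, hmem⟩ := exists_bounds hu hupos
  obtain ⟨m₂, M₂, hm₂, hmM₂, hmem₂⟩ := exists_bounds hJc hpos2
  -- the test function g = log (u / J₂)
  set g : S1 → ℝ := fun x => Real.log (u x / J₂ x) with hg
  have hgc : Continuous g :=
    (hu.div hJc fun x => (hpos2 x).ne').log
      fun x => (div_pos (hupos x) (hpos2 x)).ne'
  -- Gibbs property applied to g
  have hgib : ∫ y, Lop J₂ g y ∂μ₂ = ∫ x, g x ∂μ₂ := hG2.2 ⟨g, hgc⟩
  -- bound on |g|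
  set G : ℝ := max |Real.log (m / M₂)| |Real.log (M / m₂)| with hG
  have hgbd : ∀ x, |g x| ≤ G := by
    intro x
    apply abs_le_max_of_mem
    · exact Real.log_le_log (div_pos hm (hm₂.trans_le hmM₂))
        (div_le_div₀ (hupos x).le (hmem x).1 (hpos2 x) (hmem₂ x).2)
    · exact Real.log_le_log (div_pos (hupos x) (hpos2 x))
        (div_le_div₀ (hm.trans_le hmM).le (hmem x).2 hm₂ (hmem₂ x).1)
  -- pointwise Jensen inequality
  have hjensen : ∀ s, Lop J₂ g s ≤ Real.log (u (br0 s) + u (br1 s)) := by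
    intro s
    have hcc : ConcaveOn ℝ (Set.Ioi 0) Real.log := strictConcaveOn_log_Ioi.concaveOn
    have h0 : (0:ℝ) < u (br0 s) / J₂ (br0 s) := div_pos (hupos _) (hpos2 _)
    have h1 : (0:ℝ) < u (br1 s) / J₂ (br1 s) := div_pos (hupos _) (hpos2 _)
    have := hcc.2 (Set.mem_Ioi.2 h0) (Set.mem_Ioi.2 h1) (hpos2 (br0 s)).le
      (hpos2 (br1 s)).le (hfib2 s)
    simp only [smul_eq_mul] at this
    rw [mul_div_cancel₀ _ (hpos2 (br0 s)).ne', mul_div_cancel₀ _ (hpos2 (br1 s)).ne'] at this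
    exact this
  -- integrabilities
  have hint_logu : Integrable (fun s => Real.log (u s)) μ₂ := by
    refine intble ((hu.log fun x => (hupos x).ne').measurable) (C := max |Real.log m| |Real.log M|)
      fun x => abs_le_max_of_mem (Real.log_le_log hm (hmem x).1) (Real.log_le_log (hupos x) (hmem x).2)
  have hint_logJ : Integrable (fun s => Real.log (J₂ s)) μ₂ := by
    refine intble ((hJc.log fun x => (hpos2 x).ne').measurable) (C := max |Real.log m₂| |Real.log M₂|)
      fun x => abs_le_max_of_mem (Real.log_le_log hm₂ (hmem₂ x).1) (Real.log_le_log (hpos2 x) (hmem₂ x).2)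
  have hmum : Measurable fun s => u (br0 s) + u (br1 s) :=
    ((hu.measurable.comp measurable_br0).add (hu.measurable.comp measurable_br1))
  have hint_logsum : Integrable (fun s => Real.log (u (br0 s) + u (br1 s))) μ₂ := by
    refine intble hmum.log (C := max |Real.log (m + m)| |Real.log (M + M)|) fun x => ?_
    exact abs_le_max_of_mem
      (Real.log_le_log (by linarith) (add_le_add (hmem _).1 (hmem _).1))
      (Real.log_le_log (by have := hupos (br0 x); have := hupos (br1 x); linarith)
        (add_le_add (hmem _).2 (hmem _).2))
  have hint_Lop : Integrable (fun s => Lop J₂ g s) μ₂ := by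
    refine intble ?_ (C := G) ?_
    · exact ((hJc.measurable.comp measurable_br0).mul
        ((hgc.measurable).comp measurable_br0)).add
        ((hJc.measurable.comp measurable_br1).mul ((hgc.measurable).comp measurable_br1))
    · intro s
      have h0 := hpos2 (br0 s); have h1 := hpos2 (br1 s)
      calc |J₂ (br0 s) * g (br0 s) + J₂ (br1 s) * g (br1 s)|
          ≤ |J₂ (br0 s) * g (br0 s)| + |J₂ (br1 s) * g (br1 s)| := abs_add_le _ _
        _ = J₂ (br0 s) * |g (br0 s)| + J₂ (br1 s) * |g (br1 s)| := by
            rw [abs_mul, abs_mul, abs_of_pos h0, abs_of_pos h1]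
        _ ≤ J₂ (br0 s) * G + J₂ (br1 s) * G := by
            apply add_le_add <;> apply mul_le_mul_of_nonneg_left (hgbd _) <;> positivity
        _ = G := by rw [← add_mul, hfib2 s, one_mul]
  -- ∫ g = ∫ log u - ∫ log J₂
  have hgsplit : ∫ x, g x ∂μ₂ = (∫ s, Real.log (u s) ∂μ₂) - ∫ s, Real.log (J₂ s) ∂μ₂ := by
    rw [← integral_sub hint_logu hint_logJ]
    apply integral_congr_ae; apply ae_of_all; intro x
    exact Real.log_div (hupos x).ne' (hpos2 x).ne'
  -- ∫ Lop g ≤ ∫ log sum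
  have hmono : ∫ s, Lop J₂ g s ∂μ₂ ≤ ∫ s, Real.log (u (br0 s) + u (br1 s)) ∂μ₂ :=
    integral_mono hint_Lop hint_logsum hjensen
  -- target = ∫ log sum - ∫ log u
  have htarget : ∫ s, Real.log ((u (br0 s) + u (br1 s)) / u s) ∂μ₂ =
      (∫ s, Real.log (u (br0 s) + u (br1 s)) ∂μ₂) - ∫ s, Real.log (u s) ∂μ₂ := by
    rw [← integral_sub hint_logsum hint_logu]
    apply integral_congr_ae; apply ae_of_all; intro x
    exact Real.log_div (by have := hupos (br0 x); have := hupos (br1 x); positivity) (hupos x).ne'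
  rw [htarget]
  rw [hgsplit] at hgib
  linarith [hgib ▸ hmono]

theorem stmt8 (J₂ : S1 → ℝ) (μ₂ : Measure S1)
    (hH2 : IsHolder J₂) (hpos2 : ∀ x, 0 < J₂ x)
    (hfib2 : ∀ y, J₂ (br0 y) + J₂ (br1 y) = 1)
    (hG2 : IsGibbs J₂ μ₂) (hinv2 : Measure.map T μ₂ = μ₂) :
    ((-∫ s, Real.log (J₂ s) ∂μ₂) =
      ⨅ v : {v : C(S1, ℝ) // ∀ x, 0 < v x},
        ∫ s, Real.log ((v.1 (br0 s) + v.1 (br1 s)) / v.1 s) ∂μ₂) ∧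
    (∀ ν : Measure S1, IsProbabilityMeasure ν → Measure.map T ν = ν →
      ∀ u : S1 → ℝ, Continuous u → (∀ x, 0 < u x) →
        (-∫ s, Real.log (u s) ∂μ₂) = entropy ν →
        (∀ s, u (br0 s) + u (br1 s) ≤ 1) →
        entropy μ₂ ≤ entropy ν) := by
  haveI : IsProbabilityMeasure μ₂ := hG2.1
  obtain ⟨K, α, hα, hα1, hHol⟩ := hH2
  have hJc : Continuous J₂ := hHol.continuous (by exact_mod_cast hα)
  have hkey : ∀ u : S1 → ℝ, Continuous u → (∀ x, 0 < u x) →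
      (-∫ s, Real.log (J₂ s) ∂μ₂) ≤
        ∫ s, Real.log ((u (br0 s) + u (br1 s)) / u s) ∂μ₂ :=
    fun u hu hupos => key_lb J₂ μ₂ hJc hpos2 hfib2 hG2 u hu hupos
  have hbdd : BddBelow (Set.range fun v : {v : C(S1, ℝ) // ∀ x, 0 < v x} =>
      ∫ s, Real.log ((v.1 (br0 s) + v.1 (br1 s)) / v.1 s) ∂μ₂) := by
    refine ⟨-∫ s, Real.log (J₂ s) ∂μ₂, ?_⟩
    rintro x ⟨v, rfl⟩
    exact hkey v.1 v.1.continuous v.2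
  have hmain : (-∫ s, Real.log (J₂ s) ∂μ₂) =
      ⨅ v : {v : C(S1, ℝ) // ∀ x, 0 < v x},
        ∫ s, Real.log ((v.1 (br0 s) + v.1 (br1 s)) / v.1 s) ∂μ₂ := by
    haveI : Nonempty {v : C(S1, ℝ) // ∀ x, 0 < v x} :=
      ⟨⟨(1 : C(S1, ℝ)), fun x => by simp⟩⟩
    apply le_antisymm
    · exact le_ciInf fun v => hkey v.1 v.1.continuous v.2
    · have := ciInf_le hbdd (⟨⟨J₂, hJc⟩, hpos2⟩ : {v : C(S1, ℝ) // ∀ x, 0 < v x})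
      refine le_trans this (le_of_eq ?_)
      rw [← integral_neg]
      apply integral_congr_ae; apply ae_of_all; intro s
      simp only [ContinuousMap.coe_mk]
      rw [hfib2 s, Real.log_div one_ne_zero (hpos2 s).ne', Real.log_one, zero_sub]
  refine ⟨hmain, ?_⟩
  intro ν hν hνinv u hu hupos hent hle1
  obtain ⟨m, M, hm, hmM, hmem⟩ := exists_bounds hu hupos
  have h1 : entropy μ₂ = -∫ s, Real.log (J₂ s) ∂μ₂ := hmain.symm
  have h2 : (-∫ s, Real.log (J₂ s) ∂μ₂) ≤
      ∫ s, Real.log ((u (br0 s) + u (br1 s)) / u s) ∂μ₂ := hkey u hu hupos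
  -- integrabilities for the comparison
  have hint_logu : Integrable (fun s => Real.log (u s)) μ₂ :=
    intble ((hu.log fun x => (hupos x).ne').measurable)
      (C := max |Real.log m| |Real.log M|)
      fun x => abs_le_max_of_mem (Real.log_le_log hm (hmem x).1)
        (Real.log_le_log (hupos x) (hmem x).2)
  have hmum : Measurable fun s => u (br0 s) + u (br1 s) :=
    ((hu.measurable.comp measurable_br0).add (hu.measurable.comp measurable_br1))
  have hint_ratio : Integrable (fun s => Real.log ((u (br0 s) + u (br1 s)) / u s)) μ₂ := by
    refine intble (hmum.div (hu.measurable)).log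
      (C := max |Real.log ((m + m) / M)| |Real.log ((M + M) / m)|) fun x => ?_
    have h0 := hupos (br0 x); have h1' := hupos (br1 x); have h2' := hupos x
    refine abs_le_max_of_mem
      (Real.log_le_log (div_pos (by linarith) (hm.trans_le hmM))
        (div_le_div₀ (by linarith) (add_le_add (hmem _).1 (hmem _).1) h2' (hmem x).2))
      (Real.log_le_log (div_pos (by linarith) h2')
        (div_le_div₀ (by linarith) (add_le_add (hmem _).2 (hmem _).2) hm (hmem x).1))
  have h3 : ∫ s, Real.log ((u (br0 s) + u (br1 s)) / u s) ∂μ₂ ≤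
      ∫ s, -Real.log (u s) ∂μ₂ := by
    refine integral_mono hint_ratio hint_logu.neg fun s => ?_
    have h0 := hupos (br0 s); have h1' := hupos (br1 s); have h2' := hupos s
    have : Real.log ((u (br0 s) + u (br1 s)) / u s) ≤ Real.log (1 / u s) :=
      Real.log_le_log (div_pos (by linarith) h2')
        ((div_le_div_iff_of_pos_right h2').mpr (hle1 s))
    simpa [Real.log_div one_ne_zero h2'.ne'] using this
  have h4 : ∫ s, -Real.log (u s) ∂μ₂ = entropy ν := by
    rw [integral_neg]; exact hent
  calc entropy μ₂ = -∫ s, Real.log (J₂ s) ∂μ₂ := h1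
    _ ≤ ∫ s, Real.log ((u (br0 s) + u (br1 s)) / u s) ∂μ₂ := h2
    _ ≤ ∫ s, -Real.log (u s) ∂μ₂ := h3
    _ = entropy ν := h4
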